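/- Let P be a Poisson algebra over a field 𝔽 and let I be a Lie ideal of P. Then γ₃(I)·γ₄(I) ⊆ δ₂(I)·P. -/

import Mathlib

/-- A Poisson bracket on a commutative associative unital `F`-algebra `P`:
an `F`-bilinear, alternating bracket satisfying the Jacobi identity and the
Leibniz rule `{a·b, c} = a·{b,c} + b·{a,c}`. -/
structure PoissonBracket (F P : Type*) [Field F] [CommRing P] [Algebra F P] where
  bracket : P → P → P
  add_left : ∀ a b c : P, bracket (a + b) c = bracket a c + bracket b c
  smul_left : ∀ (r : F) (a b : P), bracket (r • a) b = r • bracket a b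
  add_right : ∀ a b c : P, bracket a (b + c) = bracket a b + bracket a c
  smul_right : ∀ (r : F) (a b : P), bracket a (r • b) = r • bracket a b
  alt : ∀ a : P, bracket a a = 0
  jacobi : ∀ a b c : P,
    bracket (bracket a b) c + bracket (bracket b c) a + bracket (bracket c a) b = 0
  leibniz : ∀ a b c : P, bracket (a * b) c = a * bracket b c + b * bracket a c

namespace PoissonBracket

variable {F P : Type*} [Field F] [CommRing P] [Algebra F P]

/-- `{A, B}`: the `F`-span of all brackets of elements of `A` with elements of `B`. -/
def lieSpan (pb : PoissonBracket F P) (A B : Submodule F P) : Submodule F P :=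
  Submodule.span F {z : P | ∃ a ∈ A, ∃ b ∈ B, z = pb.bracket a b}

/-- Upper derived series: `δ̃₀(P) = P`, `δ̃ₙ₊₁(P) = {δ̃ₙ(P), δ̃ₙ(P)}·P`. -/
def udelta (pb : PoissonBracket F P) : ℕ → Submodule F P
  | 0 => ⊤
  | n + 1 => pb.lieSpan (pb.udelta n) (pb.udelta n) * ⊤

/-- Derived series of a Lie ideal `I`: `δ₀(I) = I`, `δₙ₊₁(I) = {δₙ(I), δₙ(I)}`. -/
def dseries (pb : PoissonBracket F P) (I : Submodule F P) : ℕ → Submodule F P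
  | 0 => I
  | n + 1 => pb.lieSpan (pb.dseries I n) (pb.dseries I n)

/-- Lower central series of a Lie ideal `I`, indexed so that `lcs I 1 = γ₁(I) = I`
and `lcs I (n+1) = γₙ₊₁(I) = {γₙ(I), I}` for `n ≥ 1` (index `0` is a dummy equal to `I`). -/
def lcs (pb : PoissonBracket F P) (I : Submodule F P) : ℕ → Submodule F P
  | 0 => I
  | 1 => I
  | n + 2 => pb.lieSpan (pb.lcs I (n + 1)) I

/-- Upper Lie power series: `P⁽¹⁾ = P`, `P⁽ⁿ⁾ = {P⁽ⁿ⁻¹⁾, P}·P` for `n > 1`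
(index `0` is a dummy equal to `P`). -/
def ulps (pb : PoissonBracket F P) : ℕ → Submodule F P
  | 0 => ⊤
  | 1 => ⊤
  | n + 2 => pb.lieSpan (pb.ulps (n + 1)) ⊤ * ⊤

/-- A Poisson ideal: an ideal for the associative product which is also a Lie ideal. -/
def IsPoissonIdeal (pb : PoissonBracket F P) (I : Submodule F P) : Prop :=
  (∀ x ∈ I, ∀ p : P, p * x ∈ I) ∧ (∀ x ∈ I, ∀ p : P, pb.bracket x p ∈ I)

/-- The Poisson ideal generated by a set `S`: the smallest Poisson ideal containing `S`. -/
def poissonSpan (pb : PoissonBracket F P) (S : Set P) : Submodule F P :=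
  sInf {I : Submodule F P | pb.IsPoissonIdeal I ∧ S ⊆ I}

end PoissonBracket

open PoissonBracket

/-!
Modulo the ideal `δ₂(I) · P`, the product `{p, {q, r}} · {s, t}` with `p, q, r, s ∈ I` and
`t ∈ δ₁(I)` is alternating in `(q, r, s)`. Five instances of this alternation, together with the
Jacobi identity in each factor, show that every product `{{a, b}, c} · {{d, x}, y}` of generators
of `γ₃(I)` lies in `δ₂(I) · P`; by bilinearity `γ₃(I) · γ₃(I) ⊆ δ₂(I) · P`, and `γ₄(I) ⊆ γ₃(I)`.
-/

theorem Submodule.apply_mem_of_mem_span₂ {R M N Q : Type*} [CommSemiring R]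
    [AddCommMonoid M] [AddCommMonoid N] [AddCommMonoid Q] [Module R M] [Module R N] [Module R Q]
    {f : M →ₗ[R] N →ₗ[R] Q} {s : Set M} {t : Set N} {r : Submodule R Q}
    (h : ∀ m ∈ s, ∀ n ∈ t, f m n ∈ r) {m : M} {n : N}
    (hm : m ∈ Submodule.span R s) (hn : n ∈ Submodule.span R t) : f m n ∈ r := by
  refine Submodule.map₂_le.mp ?_ m hm n hn
  rw [Submodule.map₂_span_span, Submodule.span_le]
  rintro _ ⟨m, hm, n, hn, rfl⟩
  exact h m hm n hn

theorem Submodule.mul_mem_mul_top {R A : Type*} [CommSemiring R] [CommSemiring A] [Algebra R A]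
    (N : Submodule R A) (p : A) {w : A} (hw : w ∈ N) : p * w ∈ N * ⊤ :=
  mul_comm w p ▸ Submodule.mul_mem_mul hw Submodule.mem_top

namespace PoissonBracket

variable {F P : Type*} [Field F] [CommRing P] [Algebra F P] (pb : PoissonBracket F P)

def bracketₗ : P →ₗ[F] P →ₗ[F] P :=
  LinearMap.mk₂ F pb.bracket pb.add_left pb.smul_left pb.add_right pb.smul_right

theorem bracket_neg_right (a b : P) : pb.bracket a (-b) = -pb.bracket a b :=
  (pb.bracketₗ a).map_neg b

theorem bracket_antisymm (a b : P) : pb.bracket a b = -pb.bracket b a := by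
  have h := pb.alt (a + b)
  rw [pb.add_left, pb.add_right, pb.add_right, pb.alt, pb.alt] at h
  linear_combination h

theorem jacobi_right (a b c : P) :
    pb.bracket a (pb.bracket b c) + pb.bracket b (pb.bracket c a)
      + pb.bracket c (pb.bracket a b) = 0 := by
  linear_combination pb.bracket_antisymm a (pb.bracket b c) + pb.bracket_antisymm b (pb.bracket c a)
    + pb.bracket_antisymm c (pb.bracket a b) - pb.jacobi b c a

theorem bracket_mul_right (a b c : P) :
    pb.bracket a (b * c) = b * pb.bracket a c + c * pb.bracket a b := by
  linear_combination pb.bracket_antisymm a (b * c) - pb.leibniz b c a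
    - b * pb.bracket_antisymm c a - c * pb.bracket_antisymm b a

theorem lieSpan_le_iff {A B N : Submodule F P} :
    pb.lieSpan A B ≤ N ↔ ∀ a ∈ A, ∀ b ∈ B, pb.bracket a b ∈ N := by
  refine Submodule.span_le.trans ⟨fun h a ha b hb => h ⟨a, ha, b, hb, rfl⟩, ?_⟩
  rintro h _ ⟨a, ha, b, hb, rfl⟩
  exact h a ha b hb

theorem bracket_mem_lieSpan {A B : Submodule F P} {a b : P} (ha : a ∈ A) (hb : b ∈ B) :
    pb.bracket a b ∈ pb.lieSpan A B :=
  Submodule.subset_span ⟨a, ha, b, hb, rfl⟩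

theorem lieSpan_mono_left {A A' B : Submodule F P} (h : A ≤ A') :
    pb.lieSpan A B ≤ pb.lieSpan A' B :=
  (pb.lieSpan_le_iff).mpr fun _ ha _ hb => pb.bracket_mem_lieSpan (h ha) hb

def IsLieIdeal (I : Submodule F P) : Prop :=
  ∀ x ∈ I, ∀ p : P, pb.bracket x p ∈ I

variable {pb} {I : Submodule F P}

theorem IsLieIdeal.lieSpan_le (hI : pb.IsLieIdeal I) (A : Submodule F P) : pb.lieSpan I A ≤ I :=
  (pb.lieSpan_le_iff).mpr fun a ha b _ => hI a ha b

theorem IsLieIdeal.lcs_succ_le (hI : pb.IsLieIdeal I) : ∀ n, pb.lcs I (n + 1) ≤ pb.lcs I n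
  | 0 => le_rfl
  | 1 => hI.lieSpan_le I
  | n + 2 => pb.lieSpan_mono_left (hI.lcs_succ_le (n + 1))

theorem bracket_mem_dseries_succ {n : ℕ} {u v : P} (hu : u ∈ pb.dseries I n)
    (hv : v ∈ pb.dseries I n) : pb.bracket u v ∈ pb.dseries I (n + 1) :=
  pb.bracket_mem_lieSpan hu hv

theorem mul_bracket_mem_dseries_two_mul_top (p : P) {u t : P} (hu : u ∈ pb.dseries I 1)
    (ht : t ∈ pb.dseries I 1) : p * pb.bracket u t ∈ pb.dseries I 2 * ⊤ :=
  Submodule.mul_mem_mul_top _ p (bracket_mem_dseries_succ hu ht)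

theorem IsLieIdeal.bracket_bracket_mul_sub_mem (hI : pb.IsLieIdeal I) {y b w t : P}
    (hy : y ∈ I) (hb : b ∈ I) (hw : w ∈ pb.dseries I 1) (ht : t ∈ pb.dseries I 1) :
    pb.bracket (pb.bracket y (b * w)) t - pb.bracket y w * pb.bracket b t
      ∈ pb.dseries I 2 * ⊤ := by
  have hyb : pb.bracket y b ∈ pb.dseries I 1 := bracket_mem_dseries_succ hy hb
  have hyw : pb.bracket y w ∈ pb.dseries I 1 :=
    bracket_mem_dseries_succ hy (hI.lieSpan_le I hw)
  have expand : pb.bracket (pb.bracket y (b * w)) t - pb.bracket y w * pb.bracket b t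
      = b * pb.bracket (pb.bracket y w) t + w * pb.bracket (pb.bracket y b) t
        + pb.bracket y b * pb.bracket w t := by
    rw [pb.bracket_mul_right, pb.add_left, pb.leibniz, pb.leibniz]
    ring
  rw [expand]
  exact add_mem (add_mem (mul_bracket_mem_dseries_two_mul_top b hyw ht)
    (mul_bracket_mem_dseries_two_mul_top w hyb ht)) (mul_bracket_mem_dseries_two_mul_top _ hw ht)

/-- Expanding `{{p, {q, r * s}}, t} ∈ δ₂(I)` by the Leibniz rule, every term other than the two
displayed ones lies in `δ₂(I) · P`. -/
theorem IsLieIdeal.bracket_mul_bracket_add_swap_mem (hI : pb.IsLieIdeal I) {p q r s t : P}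
    (hp : p ∈ I) (hq : q ∈ I) (hr : r ∈ I) (hs : s ∈ I) (ht : t ∈ pb.dseries I 1) :
    pb.bracket p (pb.bracket q r) * pb.bracket s t + pb.bracket p (pb.bracket q s) * pb.bracket r t
      ∈ pb.dseries I 2 * ⊤ := by
  have hqrs : pb.bracket (pb.bracket p (pb.bracket q (r * s))) t ∈ pb.dseries I 2 * ⊤ := by
    simpa using Submodule.mul_mem_mul_top _ 1 <| bracket_mem_dseries_succ
      (bracket_mem_dseries_succ hp (hI q hq (r * s))) ht
  have hqr : pb.bracket q r ∈ pb.dseries I 1 := bracket_mem_dseries_succ hq hr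
  have hqs : pb.bracket q s ∈ pb.dseries I 1 := bracket_mem_dseries_succ hq hs
  convert sub_mem (sub_mem hqrs (hI.bracket_bracket_mul_sub_mem hp hr hqs ht))
    (hI.bracket_bracket_mul_sub_mem hp hs hqr ht) using 1
  rw [pb.bracket_mul_right, pb.add_right, pb.add_left]
  ring

theorem IsLieIdeal.bracket_mul_bracket_jacobi_mem (hI : pb.IsLieIdeal I) {p q r e d x : P}
    (hp : p ∈ I) (hq : q ∈ I) (hr : r ∈ I) (he : e ∈ I) (hd : d ∈ I) (hx : x ∈ I) :
    pb.bracket p (pb.bracket q r) * pb.bracket e (pb.bracket d x)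
      - pb.bracket p (pb.bracket q x) * pb.bracket r (pb.bracket e d)
      + pb.bracket p (pb.bracket q d) * pb.bracket r (pb.bracket e x) ∈ pb.dseries I 2 * ⊤ := by
  convert sub_mem
    (hI.bracket_mul_bracket_add_swap_mem hp hq hr hd (bracket_mem_dseries_succ he hx))
    (hI.bracket_mul_bracket_add_swap_mem hp hq hr hx (bracket_mem_dseries_succ he hd)) using 1
  rw [pb.bracket_antisymm e x, pb.bracket_neg_right d]
  linear_combination pb.bracket p (pb.bracket q r) * pb.jacobi_right e d x

theorem IsLieIdeal.bracket_bracket_mul_bracket_bracket_mem (hI : pb.IsLieIdeal I)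
    {a b c d x y : P} (ha : a ∈ I) (hb : b ∈ I) (hc : c ∈ I) (hd : d ∈ I) (hx : x ∈ I)
    (hy : y ∈ I) :
    pb.bracket (pb.bracket a b) c * pb.bracket (pb.bracket d x) y ∈ pb.dseries I 2 * ⊤ := by
  convert sub_mem (neg_mem (add_mem (hI.bracket_mul_bracket_jacobi_mem ha hy hb hc hd hx)
      (hI.bracket_mul_bracket_jacobi_mem hb hc ha hy hd hx)))
    (hI.bracket_mul_bracket_add_swap_mem ha hb hc hy (bracket_mem_dseries_succ hd hx)) using 1
  rw [pb.bracket_antisymm _ c, pb.bracket_antisymm _ y, pb.bracket_antisymm y b,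
    pb.bracket_neg_right]
  linear_combination pb.bracket y (pb.bracket d x) * pb.jacobi_right a b c

theorem IsLieIdeal.lcs_three_mul_lcs_three_le (hI : pb.IsLieIdeal I) :
    pb.lcs I 3 * pb.lcs I 3 ≤ pb.dseries I 2 * ⊤ := by
  refine Submodule.mul_le.mpr fun m hm n hn =>
    Submodule.apply_mem_of_mem_span₂ (f := LinearMap.mul F P) ?_ hm hn
  rintro _ ⟨u, hu, v, hv, rfl⟩ _ ⟨w, hw, z, hz, rfl⟩
  refine Submodule.apply_mem_of_mem_span₂
    (f := (LinearMap.mul F P).compl₁₂ (pb.bracketₗ.flip v) (pb.bracketₗ.flip z)) ?_ hu hw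
  rintro _ ⟨a, ha, b, hb, rfl⟩ _ ⟨d, hd, x, hx, rfl⟩
  exact hI.bracket_bracket_mul_bracket_bracket_mem ha hb hv hd hx hz

end PoissonBracket

/-- For a Lie ideal `I` of a Poisson algebra `P`, `γ₃(I)·γ₄(I) ⊆ δ₂(I)·P`. -/
theorem lcs_three_mul_lcs_four_le
    {F P : Type*} [Field F] [CommRing P] [Algebra F P]
    (pb : PoissonBracket F P) (I : Submodule F P)
    (hI : ∀ x ∈ I, ∀ p : P, pb.bracket x p ∈ I) :
    pb.lcs I 3 * pb.lcs I 4 ≤ pb.dseries I 2 * ⊤ := by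
  calc pb.lcs I 3 * pb.lcs I 4 ≤ pb.lcs I 3 * pb.lcs I 3 :=
        mul_le_mul_right (IsLieIdeal.lcs_succ_le hI 3) _
    _ ≤ pb.dseries I 2 * ⊤ := IsLieIdeal.lcs_three_mul_lcs_three_le hI
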